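/- arXiv:2007.06538 — 2 statements merged into one kernel-verified Lean document; each statement's English description precedes it below -/
import Mathlib

section
/- Let σ ∈ S_7 have cycle type (2,2,3) (two disjoint transpositions and a disjoint 3-cycle, no fixed points), and let a ∈ (ℤ/2)^7. Let H be either W_7 or the subgroup K_7 ⋊ S_7, and suppose (a,σ) ∈ H. Then the conjugacy class of (a,σ) in H is of type D. -/
/-- The action of a permutation `σ ∈ S_n` on a vector `a ∈ (ℤ/2)^n`:
`(σ · a)_i = a_{σ⁻¹ i}`. -/
def permAct {n : ℕ} (σ : Equiv.Perm (Fin n)) (a : Fin n → ZMod 2) : Fin n → ZMod 2 :=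
  fun i => a (σ⁻¹ i)

/-- The underlying set of the hyperoctahedral group `W n = (ℤ/2)^n ⋊ S_n`. -/
@[ext]
structure W (n : ℕ) where
  vec : Fin n → ZMod 2
  perm : Equiv.Perm (Fin n)

/-- Group structure of `W n`: `(a,σ)(b,μ) = (a + σ·b, σμ)`. -/
instance (n : ℕ) : Group (W n) where
  mul x y := ⟨x.vec + permAct x.perm y.vec, x.perm * y.perm⟩
  one := ⟨0, 1⟩
  inv x := ⟨permAct x.perm⁻¹ (-x.vec), x.perm⁻¹⟩
  mul_assoc x y z := by
    refine W.ext ?_ ?_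
    · show (x.vec + permAct x.perm y.vec) + permAct (x.perm * y.perm) z.vec
        = x.vec + permAct x.perm (y.vec + permAct y.perm z.vec)
      funext i
      simp [permAct, mul_inv_rev, Equiv.Perm.mul_apply, add_assoc]
    · exact mul_assoc _ _ _
  one_mul x := by
    refine W.ext ?_ ?_
    · show (0 : Fin n → ZMod 2) + permAct 1 x.vec = x.vec
      funext i; simp [permAct]
    · exact one_mul _
  mul_one x := by
    refine W.ext ?_ ?_
    · show x.vec + permAct x.perm 0 = x.vec
      funext i; simp [permAct]
    · exact mul_one _
  inv_mul_cancel x := by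
    refine W.ext ?_ ?_
    · show permAct x.perm⁻¹ (-x.vec) + permAct x.perm⁻¹ x.vec = 0
      funext i; simp [permAct]; exact CharTwo.add_self_eq_zero _
    · exact inv_mul_cancel _

@[simp] theorem W.mul_vec {n : ℕ} (x y : W n) :
    (x * y).vec = x.vec + permAct x.perm y.vec := rfl
@[simp] theorem W.mul_perm {n : ℕ} (x y : W n) :
    (x * y).perm = x.perm * y.perm := rfl
@[simp] theorem W.one_vec {n : ℕ} : (1 : W n).vec = 0 := rfl
@[simp] theorem W.one_perm {n : ℕ} : (1 : W n).perm = 1 := rfl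
@[simp] theorem W.inv_vec {n : ℕ} (x : W n) :
    (x⁻¹).vec = permAct x.perm⁻¹ (-x.vec) := rfl
@[simp] theorem W.inv_perm {n : ℕ} (x : W n) : (x⁻¹).perm = x.perm⁻¹ := rfl

/-- Conjugation `x ▷ y = x y x⁻¹` in a group. -/
def conjAct' {G : Type*} [Group G] (x y : G) : G := x * y * x⁻¹

/-- `sq(x,y) = x ▷ (y ▷ (x ▷ y))`. -/
def sqD {G : Type*} [Group G] (x y : G) : G := conjAct' x (conjAct' y (conjAct' x y))

/-- Conjugacy class of `x` in the group `G`. -/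
def conjClass {G : Type*} [Group G] (x : G) : Set G := {y | ∃ t : G, y = t * x * t⁻¹}

/-- A subset `O` of a group is of type D. -/
def IsTypeD {G : Type*} [Group G] (O : Set G) : Prop :=
  ∃ R S : Set G, R ⊆ O ∧ S ⊆ O ∧ R.Nonempty ∧ S.Nonempty ∧ Disjoint R S ∧
    (∀ r ∈ R, ∀ r' ∈ R, conjAct' r r' ∈ R) ∧
    (∀ s ∈ S, ∀ s' ∈ S, conjAct' s s' ∈ S) ∧
    (∀ r ∈ R, ∀ s ∈ S, conjAct' r s ∈ S ∧ conjAct' s r ∈ R) ∧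
    (∃ a ∈ R, ∃ b ∈ S, sqD a b ≠ b)

/-- The subgroup `K_n ⋊ S_n` of `W n`, where `K_n = {a : a_1 + ⋯ + a_n = 0}`. -/
def Ksub (n : ℕ) : Subgroup (W n) where
  carrier := {x | ∑ i, x.vec i = 0}
  one_mem' := by simp
  mul_mem' := by
    intro x y hx hy
    simp only [Set.mem_setOf_eq] at *
    rw [W.mul_vec]
    simp only [Pi.add_apply, Finset.sum_add_distrib, hx, zero_add, permAct]
    rw [Equiv.sum_comp x.perm⁻¹ y.vec]
    exact hy
  inv_mem' := by
    intro x hx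
    simp only [Set.mem_setOf_eq] at *
    rw [W.inv_vec]
    simp only [permAct, inv_inv, Pi.neg_apply]
    rw [Finset.sum_neg_distrib, Equiv.sum_comp x.perm x.vec, hx, neg_zero]

/-!
Conjugating by some `(0, π)` we may assume `σ = σ₀ = (0 1)(2 3)(4 5 6)`, and then project onto
`S_7`. Since `σ₀` and its conjugate `(0 2)(1 3)(4 5 6)` by `(1 2)` are distinct and commute, the
two fibres of the projection over them, cut down to the conjugacy class, are closed under `▷` and
exchanged by it. For `sq(r, s) ≠ s` take `r = (v, σ₀)` and `s = t r t⁻¹` with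
`t = (e₄ + e₅, (1 2))`: on the block `{4, 5, 6}` the vector parts of `s` and `sq(r, s)` differ by
`(c + c²)(1 + c)(e₄ + e₅) = (1 + c)(e₄ + e₅) ≠ 0`, where `c` is the 3-cycle, whatever `v` is.
As `t` and `(0, π)` have coordinate sum `0`, they lie in `K_7 ⋊ S_7`.
-/

open Equiv

section TypeD

variable {G : Type*} [Group G]

lemma mem_conjClass_self (x : G) : x ∈ conjClass x := ⟨1, by group⟩

lemma conjAct'_mem_conjClass {x y : G} (g : G) (hy : y ∈ conjClass x) :
    conjAct' g y ∈ conjClass x := by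
  obtain ⟨t, rfl⟩ := hy
  exact ⟨g * t, by simp only [conjAct', mul_inv_rev, mul_assoc]⟩

lemma conjClass_conj (g x : G) : conjClass (g * x * g⁻¹) = conjClass x := by
  ext y
  constructor
  · rintro ⟨t, rfl⟩
    exact ⟨t * g, by group⟩
  · rintro ⟨t, rfl⟩
    exact ⟨t * g⁻¹, by group⟩

theorem isTypeD_conjClass_of_map {Q : Type*} [Group Q] (φ : G →* Q) {x r s : G}
    (hr : r ∈ conjClass x) (hs : s ∈ conjClass x) (hne : φ r ≠ φ s)
    (hcomm : Commute (φ r) (φ s)) (hsq : sqD r s ≠ s) : IsTypeD (conjClass x) := by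
  have map_conjAct' (g y : G) : φ (conjAct' g y) = φ g * φ y * (φ g)⁻¹ := by
    simp only [conjAct', map_mul, map_inv]
  refine ⟨{y | y ∈ conjClass x ∧ φ y = φ r}, {y | y ∈ conjClass x ∧ φ y = φ s},
    fun y hy => hy.1, fun y hy => hy.1, ⟨r, hr, rfl⟩, ⟨s, hs, rfl⟩, ?_, ?_, ?_, ?_,
    ⟨r, ⟨hr, rfl⟩, s, ⟨hs, rfl⟩, hsq⟩⟩
  · rw [Set.disjoint_left]
    rintro y ⟨-, hyr⟩ ⟨-, hys⟩
    exact hne (hyr.symm.trans hys)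
  · rintro r₁ ⟨-, h₁⟩ r₂ ⟨hr₂, h₂⟩
    exact ⟨conjAct'_mem_conjClass _ hr₂, by rw [map_conjAct', h₁, h₂, mul_inv_cancel_right]⟩
  · rintro s₁ ⟨-, h₁⟩ s₂ ⟨hs₂, h₂⟩
    exact ⟨conjAct'_mem_conjClass _ hs₂, by rw [map_conjAct', h₁, h₂, mul_inv_cancel_right]⟩
  · rintro r₁ ⟨hr₁, h₁⟩ s₁ ⟨hs₁, h₂⟩
    refine ⟨⟨conjAct'_mem_conjClass _ hs₁, ?_⟩, ⟨conjAct'_mem_conjClass _ hr₁, ?_⟩⟩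
    · rw [map_conjAct', h₁, h₂, hcomm.eq, mul_inv_cancel_right]
    · rw [map_conjAct', h₁, h₂, ← hcomm.eq, mul_inv_cancel_right]

end TypeD

namespace W

def permHom (n : ℕ) : W n →* Perm (Fin n) where
  toFun x := x.perm
  map_one' := rfl
  map_mul' _ _ := rfl

lemma mem_of_sum_vec_eq_zero {n : ℕ} {H : Subgroup (W n)} (hH : H = ⊤ ∨ H = Ksub n)
    {x : W n} (hx : ∑ i, x.vec i = 0) : x ∈ H := by
  rcases hH with rfl | rfl
  · exact Subgroup.mem_top x
  · exact hx

end W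

def sigma223 : Perm (Fin 7) := swap 0 1 * swap 2 3 * [(4 : Fin 7), 5, 6].formPerm

def conjugator223 : W 7 := ⟨fun i => if i = 4 ∨ i = 5 then 1 else 0, swap 1 2⟩

lemma cycleType_sigma223 : sigma223.cycleType = {2, 2, 3} := by decide

lemma sum_conjugator223_vec : ∑ i, conjugator223.vec i = 0 := by decide

lemma sigma223_ne_conj : sigma223 ≠ conjugator223.perm * sigma223 * conjugator223.perm⁻¹ := by
  decide

lemma commute_sigma223_conj :
    Commute sigma223 (conjugator223.perm * sigma223 * conjugator223.perm⁻¹) := by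
  unfold Commute SemiconjBy
  decide

set_option maxRecDepth 100000 in
lemma sqD_conjugator223_vec_four_ne {x : W 7} (hx : x.perm = sigma223) :
    (sqD x (conjugator223 * x * conjugator223⁻¹)).vec 4
      ≠ (conjugator223 * x * conjugator223⁻¹).vec 4 := by
  obtain ⟨v, _⟩ := x
  subst hx
  revert v
  decide

/-- for `σ ∈ S_7` of cycle type `(2,2,3)`, the conjugacy class of
`(a,σ)` in `H` (where `H` is `W 7` or `K_7 ⋊ S_7`) is of type D. -/
theorem typeD_223 (σ : Equiv.Perm (Fin 7)) (hσ : σ.cycleType = {2, 2, 3})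
    (a : Fin 7 → ZMod 2)
    (H : Subgroup (W 7)) (hH : H = ⊤ ∨ H = Ksub 7)
    (hw : W.mk a σ ∈ H) :
    IsTypeD (conjClass (⟨W.mk a σ, hw⟩ : H)) := by
  obtain ⟨π, hπ⟩ := isConj_iff.mp <|
    Perm.isConj_iff_cycleType_eq.mpr (hσ.trans cycleType_sigma223.symm)
  let g : H := ⟨W.mk 0 π, W.mem_of_sum_vec_eq_zero hH Finset.sum_const_zero⟩
  let t : H := ⟨conjugator223, W.mem_of_sum_vec_eq_zero hH sum_conjugator223_vec⟩
  set r : H := g * ⟨W.mk a σ, hw⟩ * g⁻¹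
  have hr : (r : W 7).perm = sigma223 := hπ
  have hs : ((t * r * t⁻¹ : H) : W 7).perm
      = conjugator223.perm * sigma223 * conjugator223.perm⁻¹ := by
    rw [← hr]
    rfl
  rw [← conjClass_conj g]
  refine isTypeD_conjClass_of_map ((W.permHom 7).comp H.subtype) (mem_conjClass_self r)
    ⟨t, rfl⟩ ?_ ?_ fun h ↦ sqD_conjugator223_vec_four_ne hr (congrArg (fun z : H ↦ z.1.vec 4) h)
  · change (r : W 7).perm ≠ ((t * r * t⁻¹ : H) : W 7).perm
    rw [hr, hs]
    exact sigma223_ne_conj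
  · change Commute (r : W 7).perm ((t * r * t⁻¹ : H) : W 7).perm
    rw [hr, hs]
    exact commute_sigma223_conj
end

section
/- Let n > 5 and let τ ∈ S_n have cycle type (1^{n-3}, 3) (a single 3-cycle). Let a ∈ (ℤ/2)^n and suppose there exist i, j with τ(i) = i, τ(j) = j and a_i ≠ a_j. Let H be either W_n or the subgroup K_n ⋊ S_n, and suppose (a,τ) ∈ H. Then the conjugacy class of (a,τ) in H is of type D. -/
/-!
Write `x = (a, τ)`, fix fixed points `i, j` of `τ` with `a_i ≠ a_j` and a point `k` moved by `τ`,
and let `C` be the stabilizer of `i` in `H`. Conjugation by an element of `C` leaves the `i`-th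
coordinate of an element fixing `i` unchanged. Conjugating `x` by `u = (e_k + e_{τ k}, (i j))`,
which lies in `K_n` and whose permutation commutes with `τ`, gives `y = (b, τ)` with `b_i = a_j`;
so the `C`-conjugacy classes `R ∋ x` and `S ∋ y` are disjoint, and being subsets of `C` they are
closed under `▷`. For two elements `(f, τ)`, `(g, τ)` with `τ ^ 3 = 1`, `sq(x, y) = y` amounts to
`(xy)² = (yx)²`, i.e. to `f + g` being `τ`-invariant; here `a + b` equals `e_k + e_{τ² k}` on the
`τ`-orbit of `k`, which is not `τ`-invariant.
-/

section TypeD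

variable {G : Type*} [Group G]

theorem sqD_eq_self_iff {x y : G} : sqD x y = y ↔ (x * y) ^ 2 = (y * x) ^ 2 := by
  rw [show sqD x y = (x * y) ^ 2 * (x * y * x)⁻¹ by simp only [sqD, conjAct', pow_two]; group,
    mul_inv_eq_iff_eq_mul, show y * (x * y * x) = (y * x) ^ 2 by simp only [pow_two]; group]

def conjOrbit (C : Subgroup G) (x : G) : Set G := {z | ∃ c ∈ C, z = c * x * c⁻¹}

theorem self_mem_conjOrbit (C : Subgroup G) (x : G) : x ∈ conjOrbit C x :=
  ⟨1, C.one_mem, by group⟩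

theorem conjOrbit_subset_of_mem (C : Subgroup G) {x : G} (hx : x ∈ C) : conjOrbit C x ⊆ C := by
  rintro _ ⟨c, hc, rfl⟩
  exact C.mul_mem (C.mul_mem hc hx) (C.inv_mem hc)

theorem conjAct'_mem_conjOrbit (C : Subgroup G) {x r z : G} (hr : r ∈ C)
    (hz : z ∈ conjOrbit C x) : conjAct' r z ∈ conjOrbit C x := by
  obtain ⟨c, hc, rfl⟩ := hz
  exact ⟨r * c, C.mul_mem hr hc, by simp only [conjAct']; group⟩

theorem disjoint_conjOrbit (C : Subgroup G) {x y : G} (hxy : y ∉ conjOrbit C x) :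
    Disjoint (conjOrbit C x) (conjOrbit C y) := by
  refine Set.disjoint_left.2 ?_
  rintro _ ⟨c, hc, rfl⟩ ⟨d, hd, hcd⟩
  refine hxy ⟨d⁻¹ * c, C.mul_mem (C.inv_mem hd) hc, ?_⟩
  rw [show y = d⁻¹ * (d * y * d⁻¹) * d by group, ← hcd]
  group

theorem conjOrbit_subset_conjClass (C : Subgroup G) {x y : G} (hxy : y ∈ conjClass x) :
    conjOrbit C y ⊆ conjClass x := by
  obtain ⟨u, rfl⟩ := hxy
  rintro _ ⟨c, -, rfl⟩
  exact ⟨c * u, by group⟩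

theorem isTypeD_conjClass_of_subgroup (C : Subgroup G) {x y : G} (hx : x ∈ C) (hy : y ∈ C)
    (hxy : y ∈ conjClass x) (hyx : y ∉ conjOrbit C x) (hsq : sqD x y ≠ y) :
    IsTypeD (conjClass x) := by
  have hR := conjOrbit_subset_of_mem C hx
  have hS := conjOrbit_subset_of_mem C hy
  refine ⟨conjOrbit C x, conjOrbit C y,
    conjOrbit_subset_conjClass C ⟨1, by group⟩,
    conjOrbit_subset_conjClass C hxy, ⟨x, self_mem_conjOrbit C x⟩, ⟨y, self_mem_conjOrbit C y⟩,
    disjoint_conjOrbit C hyx, fun r hr _ hr' => conjAct'_mem_conjOrbit C (hR hr) hr',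
    fun s hs _ hs' => conjAct'_mem_conjOrbit C (hS hs) hs',
    fun r hr s hs => ⟨conjAct'_mem_conjOrbit C (hR hr) hs, conjAct'_mem_conjOrbit C (hS hs) hr⟩,
    x, self_mem_conjOrbit C x, y, self_mem_conjOrbit C y, hsq⟩

end TypeD

theorem Equiv.Perm.apply_apply_apply_of_pow_three {α : Type*} {ρ : Equiv.Perm α}
    (hρ : ρ ^ 3 = 1) (q : α) : ρ (ρ (ρ q)) = q := by
  simpa [pow_succ] using DFunLike.congr_fun hρ q

theorem Equiv.Perm.symm_apply_of_pow_three {α : Type*} {ρ : Equiv.Perm α}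
    (hρ : ρ ^ 3 = 1) (q : α) : ρ.symm q = ρ (ρ q) :=
  (ρ.symm_apply_eq).2 (ρ.apply_apply_apply_of_pow_three hρ q).symm

theorem Equiv.Perm.commute_swap_of_apply_eq {α : Type*} [DecidableEq α] {τ : Equiv.Perm α}
    {i j : α} (hi : τ i = i) (hj : τ j = j) : Commute (Equiv.swap i j) τ := by
  rw [Commute, SemiconjBy, Equiv.swap_mul_eq_mul_swap, Equiv.Perm.inv_eq_iff_eq.2 hi.symm,
    Equiv.Perm.inv_eq_iff_eq.2 hj.symm]

section Hyperoctahedral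

variable {n : ℕ}

@[simp] theorem permAct_apply (σ : Equiv.Perm (Fin n)) (a : Fin n → ZMod 2) (i : Fin n) :
    permAct σ a i = a (σ⁻¹ i) := rfl

def W.permHom_s13 (n : ℕ) : W n →* Equiv.Perm (Fin n) where
  toFun := W.perm
  map_one' := rfl
  map_mul' _ _ := rfl

theorem W.conj_vec (t w : W n) : (t * w * t⁻¹).vec =
    t.vec + permAct t.perm w.vec + permAct (t.perm * w.perm * t.perm⁻¹) t.vec := by
  funext q
  simp [CharTwo.neg_eq]

theorem W.conj_vec_apply {t w : W n} {i : Fin n} (h : (t * w * t⁻¹).perm i = i) :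
    (t * w * t⁻¹).vec i = w.vec (t.perm⁻¹ i) := by
  have hi : (t.perm * w.perm * t.perm⁻¹)⁻¹ i = i := Equiv.Perm.inv_eq_iff_eq.2 h.symm
  rw [W.conj_vec, Pi.add_apply, Pi.add_apply, permAct_apply, permAct_apply, hi,
    add_right_comm, CharTwo.add_self_eq_zero, zero_add]

theorem W.conj_vec_apply_of_fixed {t w : W n} {i : Fin n} (ht : t.perm i = i)
    (hw : w.perm i = i) : (t * w * t⁻¹).vec i = w.vec i := by
  have hti : t.perm⁻¹ i = i := Equiv.Perm.inv_eq_iff_eq.2 ht.symm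
  rw [W.conj_vec_apply (by rw [W.mul_perm, W.mul_perm, W.inv_perm,
    Equiv.Perm.mul_apply, Equiv.Perm.mul_apply, hti, hw, ht]), hti]

theorem W.mk_conj_mk_of_commute {σ ρ : Equiv.Perm (Fin n)} (h : Commute σ ρ)
    (c a : Fin n → ZMod 2) :
    W.mk c σ * W.mk a ρ * (W.mk c σ)⁻¹ = W.mk (c + permAct σ a + permAct ρ c) ρ := by
  have hρ : σ * ρ * σ⁻¹ = ρ := by rw [h.eq, mul_inv_cancel_right]
  exact W.ext (by rw [W.conj_vec]; simp only [hρ]) hρ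

theorem W.permAct_add_eq_of_sqD_eq {ρ : Equiv.Perm (Fin n)} (hρ : ρ ^ 3 = 1)
    {f g : Fin n → ZMod 2} (h : sqD (W.mk f ρ) (W.mk g ρ) = W.mk g ρ) :
    permAct ρ (f + g) = f + g := by
  have hρ' : ∀ q, ρ.symm (ρ.symm q) = ρ q := fun q => by
    rw [Equiv.Perm.symm_apply_of_pow_three hρ, Equiv.apply_symm_apply]
  rw [sqD_eq_self_iff] at h
  funext q
  have := congrFun (congrArg W.vec h) (ρ q)
  simp only [pow_two, W.mul_vec, W.mul_perm, Pi.add_apply, permAct_apply, Equiv.Perm.coe_inv,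
    Equiv.symm_apply_apply, mul_inv_rev, Equiv.Perm.coe_mul, Function.comp_apply, hρ'] at this
  simp only [permAct_apply, Pi.add_apply, Equiv.Perm.inv_def]
  grind

def W.twist (τ : Equiv.Perm (Fin n)) (i j k : Fin n) : W n :=
  W.mk (Pi.single k 1 + Pi.single (τ k) 1) (Equiv.swap i j)

theorem W.twist_mem_Ksub (τ : Equiv.Perm (Fin n)) (i j k : Fin n) : W.twist τ i j k ∈ Ksub n := by
  show ∑ q, (Pi.single k 1 + Pi.single (τ k) 1 : Fin n → ZMod 2) q = 0
  simp only [Pi.add_apply, Finset.sum_add_distrib, Finset.sum_pi_single', Finset.mem_univ,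
    if_true]
  decide

theorem W.twist_conj_perm {τ : Equiv.Perm (Fin n)} {i j : Fin n} (hi : τ i = i) (hj : τ j = j)
    (k : Fin n) (a : Fin n → ZMod 2) :
    (W.twist τ i j k * W.mk a τ * (W.twist τ i j k)⁻¹).perm = τ := by
  rw [W.twist, W.mk_conj_mk_of_commute (Equiv.Perm.commute_swap_of_apply_eq hi hj)]

theorem W.twist_conj_vec_apply_left {τ : Equiv.Perm (Fin n)} {i j : Fin n} (hi : τ i = i)
    (hj : τ j = j) (k : Fin n) (a : Fin n → ZMod 2) :
    (W.twist τ i j k * W.mk a τ * (W.twist τ i j k)⁻¹).vec i = a j := by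
  rw [W.conj_vec_apply (by rw [W.twist_conj_perm hi hj, hi])]
  simp [W.twist]

theorem W.sqD_twist_conj_ne {τ : Equiv.Perm (Fin n)} (hτ : τ ^ 3 = 1) {i j k : Fin n}
    (hi : τ i = i) (hj : τ j = j) (hk : τ k ≠ k) (a : Fin n → ZMod 2) :
    sqD (W.mk a τ) (W.twist τ i j k * W.mk a τ * (W.twist τ i j k)⁻¹) ≠
      W.twist τ i j k * W.mk a τ * (W.twist τ i j k)⁻¹ := by
  rw [W.twist, W.mk_conj_mk_of_commute (Equiv.Perm.commute_swap_of_apply_eq hi hj)]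
  intro h
  have := congrFun (W.permAct_add_eq_of_sqD_eq hτ h) (τ k)
  have hki : k ≠ i := fun e => hk (e ▸ hi)
  have hkj : k ≠ j := fun e => hk (e ▸ hj)
  have hτki : τ k ≠ i := fun e => hki (τ.injective (e.trans hi.symm))
  have hτkj : τ k ≠ j := fun e => hkj (τ.injective (e.trans hj.symm))
  have hτ2 : τ (τ k) ≠ k := fun e => hk (by
    simpa [e] using τ.apply_apply_apply_of_pow_three hτ k)
  have hτ2' : τ (τ k) ≠ τ k := fun e => hk (τ.injective e)
  simp only [permAct_apply, Equiv.Perm.coe_inv, Equiv.symm_apply_apply, Pi.add_apply,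
    Pi.single_eq_same, ne_eq, hk.symm, not_false_eq_true, Pi.single_eq_of_ne, add_zero,
    Equiv.swap_inv, hki, hkj, Equiv.swap_apply_of_ne_of_ne, τ.symm_apply_of_pow_three hτ k, hτ2,
    hτ2', hk, zero_add, hτki, hτkj] at this
  grind

end Hyperoctahedral

theorem typeD_threecycle_general (n : ℕ) (τ : Equiv.Perm (Fin n))
    (hτ : τ.cycleType = {3})
    (a : Fin n → ZMod 2)
    (hij : ∃ i j : Fin n, τ i = i ∧ τ j = j ∧ a i ≠ a j)
    (H : Subgroup (W n)) (hH : H = ⊤ ∨ H = Ksub n)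
    (hw : W.mk a τ ∈ H) :
    IsTypeD (conjClass (⟨W.mk a τ, hw⟩ : H)) := by
  obtain ⟨i, j, hi, hj, haij⟩ := hij
  have hτ3 : τ ^ 3 = 1 := Equiv.Perm.IsThreeCycle.orderOf hτ ▸ pow_orderOf_eq_one τ
  obtain ⟨k, hk⟩ : ∃ k, τ k ≠ k := by
    by_contra! h
    exact Equiv.Perm.IsThreeCycle.ne_one hτ (Equiv.ext h)
  have hu : W.twist τ i j k ∈ H := by
    rcases hH with rfl | rfl
    exacts [Subgroup.mem_top _, W.twist_mem_Ksub τ i j k]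
  let u : H := ⟨_, hu⟩
  let X : H := ⟨W.mk a τ, hw⟩
  let C : Subgroup H :=
    (MulAction.stabilizer (Equiv.Perm (Fin n)) i).comap ((W.permHom_s13 n).comp H.subtype)
  refine isTypeD_conjClass_of_subgroup C (y := u * X * u⁻¹) hi
    (show (W.twist τ i j k * W.mk a τ * (W.twist τ i j k)⁻¹).perm i = i by
      rw [W.twist_conj_perm hi hj, hi]) ⟨u, rfl⟩ ?_
    (W.sqD_twist_conj_ne hτ3 hi hj hk a ∘ congrArg Subtype.val)
  rintro ⟨c, hc, hcX⟩
  refine haij (Eq.symm ?_)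
  calc a j = ((u * X * u⁻¹ : H) : W n).vec i := (W.twist_conj_vec_apply_left hi hj k a).symm
    _ = ((c * X * c⁻¹ : H) : W n).vec i := congrArg (fun z : H => (z : W n).vec i) hcX
    _ = a i := W.conj_vec_apply_of_fixed hc hi

/-- for `n > 5` and `τ ∈ S_n` a single 3-cycle (cycle type
`(1^{n-3},3)`), if `a_i ≠ a_j` for some fixed points `i, j` of `τ`, then the
conjugacy class of `(a,τ)` in `H` (where `H` is `W n` or `K_n ⋊ S_n`) is of
type D. -/
theorem typeD_threecycle (n : ℕ) (hn : 5 < n) (τ : Equiv.Perm (Fin n))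
    (hτ : τ.cycleType = {3})
    (a : Fin n → ZMod 2)
    (hij : ∃ i j : Fin n, τ i = i ∧ τ j = j ∧ a i ≠ a j)
    (H : Subgroup (W n)) (hH : H = ⊤ ∨ H = Ksub n)
    (hw : W.mk a τ ∈ H) :
    IsTypeD (conjClass (⟨W.mk a τ, hw⟩ : H)) :=
  typeD_threecycle_general n τ hτ a hij H hH hw
end
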